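/- arXiv:1412.4430 — 4 statements merged into one kernel-verified Lean document; each statement's English description precedes it below -/
import Mathlib

section
/- Let μ and ν be Borel probability measures on ℝⁿ, and let P be a Borel probability measure on C([0,1], ℝⁿ) such that the pushforwards of P under the evaluation maps γ ↦ γ(0) and γ ↦ γ(1) equal μ and ν respectively, and such that P-almost every path is continuously differentiable with finite kinetic energy. Then ∫ (∫_0^1 (1/2)‖γ'(t)‖² dt) dP(γ) ≥ inf over all couplings π of μ and ν of ∫_{ℝⁿ×ℝⁿ} (1/2)‖x − y‖² dπ(x,y). -/
/-!
Pushing `P` forward along `γ ↦ (γ 0, γ 1)` gives a coupling of `μ` and `ν` whose cost is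
`∫ ½‖γ 1 - γ 0‖² dP`. Pathwise, for a `C¹` path the fundamental theorem of calculus and
Cauchy–Schwarz on `[0, 1]` give `‖γ 1 - γ 0‖² = ‖∫ γ'‖² ≤ (∫ ‖γ'‖)² ≤ ∫ ‖γ'‖²`, so the kinetic
energy dominates the cost integrand.
-/

open MeasureTheory Set
open scoped ENNReal

/-- The Borel σ-algebra on the space `C([0,1], ℝⁿ)` of continuous paths (whose topology,
for a compact time interval, is that of the supremum metric). -/
noncomputable instance pathSpaceMeasurableSpace (n : ℕ) (t₀ t₁ : ℝ) :
    MeasurableSpace C(Set.Icc t₀ t₁, EuclideanSpace ℝ (Fin n)) := borel _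

instance pathSpaceBorelSpace (n : ℕ) (t₀ t₁ : ℝ) :
    BorelSpace C(Set.Icc t₀ t₁, EuclideanSpace ℝ (Fin n)) := ⟨rfl⟩

/-- A path `γ ∈ C([t₀,t₁], ℝⁿ)` is continuously differentiable if its extension to `ℝ`
(constant outside `[t₀,t₁]`) is `C¹` on `[t₀,t₁]`. -/
def IsC1Path {n : ℕ} {t₀ t₁ : ℝ} (h : t₀ ≤ t₁)
    (γ : C(Set.Icc t₀ t₁, EuclideanSpace ℝ (Fin n))) : Prop :=
  ContDiffOn ℝ 1 (Set.IccExtend h γ) (Set.Icc t₀ t₁)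

/-- The kinetic energy `∫_{t₀}^{t₁} (1/2)‖γ'(t)‖² dt` of a path `γ ∈ C([t₀,t₁], ℝⁿ)`. -/
noncomputable def pathKE {n : ℕ} {t₀ t₁ : ℝ} (h : t₀ ≤ t₁)
    (γ : C(Set.Icc t₀ t₁, EuclideanSpace ℝ (Fin n))) : ℝ :=
  ∫ t in t₀..t₁, (1 / 2) * ‖derivWithin (Set.IccExtend h γ) (Set.Icc t₀ t₁) t‖ ^ 2

/-- A path has finite kinetic energy if `t ↦ ‖γ'(t)‖²` is integrable on `[t₀,t₁]`. -/
def FiniteKE {n : ℕ} {t₀ t₁ : ℝ} (h : t₀ ≤ t₁)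
    (γ : C(Set.Icc t₀ t₁, EuclideanSpace ℝ (Fin n))) : Prop :=
  IntervalIntegrable
    (fun t => ‖derivWithin (Set.IccExtend h γ) (Set.Icc t₀ t₁) t‖ ^ 2) volume t₀ t₁

/-- A coupling of `μ` and `ν`: a measure on the product whose marginals are `μ` and `ν`. -/
def IsCoupling {n : ℕ}
    (π : Measure (EuclideanSpace ℝ (Fin n) × EuclideanSpace ℝ (Fin n)))
    (μ ν : Measure (EuclideanSpace ℝ (Fin n))) : Prop :=
  π.map Prod.fst = μ ∧ π.map Prod.snd = ν

theorem sq_intervalIntegral_le_mul_intervalIntegral_sq {g : ℝ → ℝ} {a b : ℝ} (hab : a ≤ b)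
    (hg : IntervalIntegrable g volume a b)
    (hg2 : IntervalIntegrable (fun t => g t ^ 2) volume a b) :
    (∫ t in a..b, g t) ^ 2 ≤ (b - a) * ∫ t in a..b, g t ^ 2 := by
  set I := ∫ t in a..b, g t
  set J := ∫ t in a..b, g t ^ 2
  set L := b - a
  have hvar : ∫ t in a..b, (L * g t - I) ^ 2 = L * (L * J - I ^ 2) := by
    have hexpand :
        (fun t => (L * g t - I) ^ 2) = fun t => L ^ 2 * g t ^ 2 - 2 * L * I * g t + I ^ 2 := by
      funext t; ring
    rw [hexpand, intervalIntegral.integral_add ((hg2.const_mul _).sub (hg.const_mul _))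
        intervalIntegrable_const, intervalIntegral.integral_sub (hg2.const_mul _) (hg.const_mul _),
      intervalIntegral.integral_const_mul, intervalIntegral.integral_const_mul,
      intervalIntegral.integral_const, smul_eq_mul]
    ring
  have hnonneg : 0 ≤ L * (L * J - I ^ 2) :=
    hvar ▸ intervalIntegral.integral_nonneg hab fun t _ => sq_nonneg _
  rcases hab.eq_or_lt with rfl | hlt
  · simp [I, L]
  · nlinarith [sub_pos.2 hlt]

theorem norm_sub_sq_le_mul_intervalIntegral_norm_derivWithin_sq {E : Type*}
    [NormedAddCommGroup E] [NormedSpace ℝ E] [CompleteSpace E] {f : ℝ → E} {a b : ℝ}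
    (hab : a ≤ b) (hf : ContDiffOn ℝ 1 f (Icc a b)) :
    ‖f b - f a‖ ^ 2 ≤ (b - a) * ∫ t in a..b, ‖derivWithin f (Icc a b) t‖ ^ 2 := by
  rcases hab.eq_or_lt with rfl | hlt
  · simp
  have hcont : ContinuousOn (fun t => ‖derivWithin f (Icc a b) t‖) (Icc a b) :=
    (hf.continuousOn_derivWithin (uniqueDiffOn_Icc hlt) le_rfl).norm
  calc ‖f b - f a‖ ^ 2 = ‖∫ t in a..b, derivWithin f (Icc a b) t‖ ^ 2 := by
        rw [intervalIntegral.integral_derivWithin_Icc_of_contDiffOn_Icc hf hab]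
    _ ≤ (∫ t in a..b, ‖derivWithin f (Icc a b) t‖) ^ 2 :=
        pow_le_pow_left₀ (norm_nonneg _) (intervalIntegral.norm_integral_le_integral_norm hab) 2
    _ ≤ (b - a) * ∫ t in a..b, ‖derivWithin f (Icc a b) t‖ ^ 2 :=
        sq_intervalIntegral_le_mul_intervalIntegral_sq hab (hcont.intervalIntegrable_of_Icc hab)
          ((hcont.pow 2).intervalIntegrable_of_Icc hab)

theorem half_norm_sub_sq_le_mul_pathKE {n : ℕ} {t₀ t₁ : ℝ} (h : t₀ ≤ t₁)
    {γ : C(Set.Icc t₀ t₁, EuclideanSpace ℝ (Fin n))} (hγ : IsC1Path h γ) :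
    (1 / 2) * ‖γ ⟨t₁, right_mem_Icc.2 h⟩ - γ ⟨t₀, left_mem_Icc.2 h⟩‖ ^ 2 ≤
      (t₁ - t₀) * pathKE h γ := by
  have hends := norm_sub_sq_le_mul_intervalIntegral_norm_derivWithin_sq h hγ
  rw [IccExtend_right, IccExtend_left] at hends
  rw [pathKE, intervalIntegral.integral_const_mul]
  nlinarith

theorem isCoupling_map_prodMk {n : ℕ} {X : Type*} [MeasurableSpace X] (P : Measure X)
    {f g : X → EuclideanSpace ℝ (Fin n)} (hf : Measurable f) (hg : Measurable g) :
    IsCoupling (P.map fun x => (f x, g x)) (P.map f) (P.map g) :=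
  ⟨Measure.fst_map_prodMk hg, Measure.snd_map_prodMk hf⟩

theorem expected_kinetic_energy_ge_transport_cost_general {n : ℕ}
    (μ ν : Measure (EuclideanSpace ℝ (Fin n)))
    (P : Measure C(Set.Icc (0:ℝ) 1, EuclideanSpace ℝ (Fin n))) [IsProbabilityMeasure P]
    (h0 : P.map (fun γ => γ ⟨0, Set.left_mem_Icc.mpr zero_le_one⟩) = μ)
    (h1 : P.map (fun γ => γ ⟨1, Set.right_mem_Icc.mpr zero_le_one⟩) = ν)
    (hP : ∀ᵐ γ ∂P, IsC1Path zero_le_one γ ∧ FiniteKE zero_le_one γ) :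
    sInf {c : ℝ≥0∞ |
        ∃ π : Measure (EuclideanSpace ℝ (Fin n) × EuclideanSpace ℝ (Fin n)),
          IsProbabilityMeasure π ∧ IsCoupling π μ ν ∧
          c = ∫⁻ p, ENNReal.ofReal ((1 / 2) * ‖p.1 - p.2‖ ^ 2) ∂π} ≤
      ∫⁻ γ, ENNReal.ofReal (pathKE zero_le_one γ) ∂P := by
  set endpoints := fun γ : C(Set.Icc (0:ℝ) 1, EuclideanSpace ℝ (Fin n)) =>
    (γ ⟨0, Set.left_mem_Icc.mpr zero_le_one⟩, γ ⟨1, Set.right_mem_Icc.mpr zero_le_one⟩)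
  have hmeas : Measurable endpoints := by fun_prop
  have hcost : Measurable fun p : EuclideanSpace ℝ (Fin n) × EuclideanSpace ℝ (Fin n) =>
      ENNReal.ofReal ((1 / 2) * ‖p.1 - p.2‖ ^ 2) := by fun_prop
  have hcoupling : IsCoupling (P.map endpoints) μ ν :=
    h0 ▸ h1 ▸ isCoupling_map_prodMk P (continuous_eval_const _).measurable
      (continuous_eval_const _).measurable
  have hprob : IsProbabilityMeasure (P.map endpoints) :=
    Measure.isProbabilityMeasure_map hmeas.aemeasurable
  refine le_trans (sInf_le ⟨P.map endpoints, hprob, hcoupling, rfl⟩) ?_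
  rw [lintegral_map hcost hmeas]
  refine lintegral_mono_ae (hP.mono fun γ hγ => ENNReal.ofReal_le_ofReal ?_)
  simpa [endpoints, norm_sub_rev] using half_norm_sub_sq_le_mul_pathKE zero_le_one hγ.1

/-- If `P` is a Borel probability measure on `C([0,1], ℝⁿ)` with time-`0`
marginal `μ` and time-`1` marginal `ν`, concentrated on `C¹` paths of finite kinetic energy,
then the expected kinetic energy is at least the optimal quadratic transportation cost
between `μ` and `ν`. -/
theorem expected_kinetic_energy_ge_transport_cost {n : ℕ}
    (μ ν : Measure (EuclideanSpace ℝ (Fin n)))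
    [IsProbabilityMeasure μ] [IsProbabilityMeasure ν]
    (P : Measure C(Set.Icc (0:ℝ) 1, EuclideanSpace ℝ (Fin n))) [IsProbabilityMeasure P]
    (h0 : P.map (fun γ => γ ⟨0, Set.left_mem_Icc.mpr zero_le_one⟩) = μ)
    (h1 : P.map (fun γ => γ ⟨1, Set.right_mem_Icc.mpr zero_le_one⟩) = ν)
    (hP : ∀ᵐ γ ∂P, IsC1Path zero_le_one γ ∧ FiniteKE zero_le_one γ) :
    sInf {c : ℝ≥0∞ |
        ∃ π : Measure (EuclideanSpace ℝ (Fin n) × EuclideanSpace ℝ (Fin n)),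
          IsProbabilityMeasure π ∧ IsCoupling π μ ν ∧
          c = ∫⁻ p, ENNReal.ofReal ((1 / 2) * ‖p.1 - p.2‖ ^ 2) ∂π} ≤
      ∫⁻ γ, ENNReal.ofReal (pathKE zero_le_one γ) ∂P :=
  expected_kinetic_energy_ge_transport_cost_general μ ν P h0 h1 hP
end

section
/- Let μ and ν be Borel probability measures on ℝⁿ such that the infimum over couplings π of μ and ν of ∫ (1/2)‖x − y‖² dπ(x,y) is finite. Then this infimum equals the infimum, over all Borel probability measures P on C([0,1], ℝⁿ) whose pushforwards under the evaluation maps at times 0 and 1 are μ and ν respectively and which concentrate on continuously differentiable paths of finite kinetic energy, of the expected kinetic energy ∫ (∫_0^1 (1/2)‖γ'(t)‖² dt) dP(γ). -/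
open MeasureTheory Set
open scoped ENNReal

/-! Pushing a coupling forward along straight-line interpolation gives a path measure of the
same cost, since the segment from `x` to `y` has kinetic energy `½‖x - y‖²`. Conversely, by
Jensen's inequality a `C¹` path on `[0,1]` has kinetic energy at least `½‖γ 1 - γ 0‖²`, so the
endpoint law of an admissible path measure is a coupling of no larger cost. -/

open Topology

theorem norm_sub_sq_le_mul_integral_norm_derivWithin_sq {E : Type*} [NormedAddCommGroup E]
    [NormedSpace ℝ E] [CompleteSpace E] {f : ℝ → E} {a b : ℝ} (hab : a < b)
    (hf : ContDiffOn ℝ 1 f (Icc a b)) :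
    ‖f b - f a‖ ^ 2 ≤ (b - a) * ∫ t in a..b, ‖derivWithin f (Icc a b) t‖ ^ 2 := by
  set f' := derivWithin f (Icc a b)
  have hf'c : ContinuousOn f' (Icc a b) :=
    hf.continuousOn_derivWithin (uniqueDiffOn_Icc hab) le_rfl
  have hjensen : ‖⨍ t in Ioc a b, f' t‖ ^ 2 ≤ ⨍ t in Ioc a b, ‖f' t‖ ^ 2 :=
    ((convexOn_norm convex_univ).pow (fun _ _ => norm_nonneg _) 2).map_set_average_le
      (continuous_norm.pow 2).continuousOn isClosed_univ (by simp [hab]) (by simp) (by simp)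
      (hf'c.integrableOn_Icc.mono_set Ioc_subset_Icc_self)
      (((continuous_norm.pow 2).comp_continuousOn hf'c).integrableOn_Icc.mono_set
        Ioc_subset_Icc_self)
  have hba : 0 < b - a := sub_pos.2 hab
  have hlen : volume.real (Ioc a b) = b - a := by simp [measureReal_def, hab.le]
  rw [setAverage_eq, setAverage_eq, hlen, ← intervalIntegral.integral_of_le hab.le,
    ← intervalIntegral.integral_of_le hab.le,
    intervalIntegral.integral_derivWithin_Icc_of_contDiffOn_Icc hf hab.le, norm_smul,
    mul_pow, smul_eq_mul, Real.norm_of_nonneg (inv_nonneg.2 hba.le)] at hjensen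
  have := mul_le_mul_of_nonneg_left hjensen (sq_nonneg (b - a))
  field_simp at this
  linarith

section Paths

variable {n : ℕ} {t₀ t₁ : ℝ}

theorem IsC1Path.finiteKE (h : t₀ ≤ t₁) {γ : C(Icc t₀ t₁, EuclideanSpace ℝ (Fin n))}
    (hγ : IsC1Path h γ) : FiniteKE h γ := by
  rcases h.eq_or_lt with rfl | hlt
  · exact IntervalIntegrable.refl
  refine ContinuousOn.intervalIntegrable ?_
  rw [uIcc_of_le h]
  exact (hγ.continuousOn_derivWithin (uniqueDiffOn_Icc hlt) le_rfl).norm.pow 2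

theorem IsC1Path.sq_norm_sub_le_pathKE (h : t₀ < t₁)
    {γ : C(Icc t₀ t₁, EuclideanSpace ℝ (Fin n))} (hγ : IsC1Path h.le γ) :
    (1 / 2) * ‖γ ⟨t₁, right_mem_Icc.2 h.le⟩ - γ ⟨t₀, left_mem_Icc.2 h.le⟩‖ ^ 2
      ≤ (t₁ - t₀) * pathKE h.le γ := by
  have := norm_sub_sq_le_mul_integral_norm_derivWithin_sq h hγ
  rw [IccExtend_right, IccExtend_left] at this
  rw [pathKE, intervalIntegral.integral_const_mul]
  linarith

end Paths

section Endpoints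

variable (X : Type*) [TopologicalSpace X]

def pathEndpoints : C(C(Icc (0 : ℝ) 1, X), X × X) :=
  ⟨fun γ => (γ 0, γ 1), by fun_prop⟩

@[simp]
theorem pathEndpoints_apply (γ : C(Icc (0 : ℝ) 1, X)) : pathEndpoints X γ = (γ 0, γ 1) := rfl

end Endpoints

section Segments

variable (E : Type*) [NormedAddCommGroup E] [NormedSpace ℝ E]

noncomputable def segmentPath : C(E × E, C(Icc (0 : ℝ) 1, E)) :=
  ContinuousMap.curry ⟨fun q => AffineMap.lineMap q.1.1 q.1.2 (q.2 : ℝ), by fun_prop⟩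

variable {E}

@[simp]
theorem segmentPath_apply (p : E × E) (t : Icc (0 : ℝ) 1) :
    segmentPath E p t = AffineMap.lineMap p.1 p.2 (t : ℝ) := rfl

theorem segmentPath_zero (p : E × E) : segmentPath E p 0 = p.1 := by simp

theorem segmentPath_one (p : E × E) : segmentPath E p 1 = p.2 := by simp

theorem pathEndpoints_segmentPath : Function.LeftInverse (pathEndpoints E) (segmentPath E) :=
  fun p => Prod.ext (segmentPath_zero p) (segmentPath_one p)

theorem isClosedEmbedding_segmentPath : IsClosedEmbedding (segmentPath E) :=
  pathEndpoints_segmentPath.isClosedEmbedding (pathEndpoints E).continuous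
    (segmentPath E).continuous

theorem eqOn_IccExtend_segmentPath (p : E × E) :
    EqOn (IccExtend zero_le_one (segmentPath E p)) (AffineMap.lineMap p.1 p.2) (Icc 0 1) :=
  fun _ ht => by rw [IccExtend_of_mem _ _ ht, segmentPath_apply]

end Segments

section Euclidean

variable {n : ℕ}

theorem isC1Path_segmentPath (p : EuclideanSpace ℝ (Fin n) × EuclideanSpace ℝ (Fin n)) :
    IsC1Path zero_le_one (segmentPath _ p) :=
  (AffineMap.contDiff_lineMap p.1 p.2).contDiffOn.congr (eqOn_IccExtend_segmentPath p)

theorem pathKE_segmentPath (p : EuclideanSpace ℝ (Fin n) × EuclideanSpace ℝ (Fin n)) :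
    pathKE zero_le_one (segmentPath _ p) = (1 / 2) * ‖p.2 - p.1‖ ^ 2 := by
  have hderiv : EqOn (derivWithin (IccExtend zero_le_one (segmentPath _ p)) (Icc 0 1))
      (fun _ => p.2 - p.1) (Icc 0 1) := fun t ht => by
    rw [derivWithin_congr (eqOn_IccExtend_segmentPath p) (eqOn_IccExtend_segmentPath p ht),
      AffineMap.hasDerivAt_lineMap.hasDerivWithinAt.derivWithin
        (uniqueDiffOn_Icc zero_lt_one t ht)]
  rw [pathKE, intervalIntegral.integral_congr (g := fun _ => (1 / 2) * ‖p.2 - p.1‖ ^ 2)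
    fun t ht => by rw [uIcc_of_le zero_le_one] at ht; rw [hderiv ht]]
  simp

end Euclidean

section Measures

variable {n : ℕ}

theorem measurableEmbedding_segmentPath :
    MeasurableEmbedding (segmentPath (EuclideanSpace ℝ (Fin n))) :=
  isClosedEmbedding_segmentPath.measurableEmbedding

theorem measurable_pathEndpoints : Measurable (pathEndpoints (EuclideanSpace ℝ (Fin n))) :=
  (pathEndpoints _).continuous.measurable

theorem map_segmentPath_map_pathEndpoints
    (π : Measure (EuclideanSpace ℝ (Fin n) × EuclideanSpace ℝ (Fin n))) :
    (π.map (segmentPath _)).map (pathEndpoints _) = π := by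
  rw [Measure.map_map measurable_pathEndpoints measurableEmbedding_segmentPath.measurable,
    pathEndpoints_segmentPath.comp_eq_id, Measure.map_id]

theorem isCoupling_map_pathEndpoints_iff {P : Measure C(Icc (0 : ℝ) 1, EuclideanSpace ℝ (Fin n))}
    {μ ν : Measure (EuclideanSpace ℝ (Fin n))} :
    IsCoupling (P.map (pathEndpoints _)) μ ν ↔
      P.map (fun γ => γ 0) = μ ∧ P.map (fun γ => γ 1) = ν := by
  rw [IsCoupling, Measure.map_map measurable_fst measurable_pathEndpoints,
    Measure.map_map measurable_snd measurable_pathEndpoints]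
  rfl

theorem lintegral_cost_map_pathEndpoints_le
    {P : Measure C(Icc (0 : ℝ) 1, EuclideanSpace ℝ (Fin n))}
    (hP : ∀ᵐ γ ∂P, IsC1Path zero_le_one γ) :
    ∫⁻ p, ENNReal.ofReal ((1 / 2) * ‖p.1 - p.2‖ ^ 2) ∂(P.map (pathEndpoints _))
      ≤ ∫⁻ γ, ENNReal.ofReal (pathKE zero_le_one γ) ∂P := by
  rw [lintegral_map (by fun_prop) measurable_pathEndpoints]
  refine lintegral_mono_ae (hP.mono fun γ hγ => ENNReal.ofReal_le_ofReal ?_)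
  simpa [norm_sub_rev] using hγ.sq_norm_sub_le_pathKE zero_lt_one

theorem ae_isC1Path_map_segmentPath
    (π : Measure (EuclideanSpace ℝ (Fin n) × EuclideanSpace ℝ (Fin n))) :
    ∀ᵐ γ ∂(π.map (segmentPath _)), IsC1Path zero_le_one γ ∧ FiniteKE zero_le_one γ :=
  measurableEmbedding_segmentPath.ae_map_iff.2 <| ae_of_all _ fun p =>
    ⟨isC1Path_segmentPath p, (isC1Path_segmentPath p).finiteKE zero_le_one⟩

/-- `pathKE` need not be measurable: `segmentPath` is a measurable embedding. -/
theorem lintegral_pathKE_map_segmentPath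
    (π : Measure (EuclideanSpace ℝ (Fin n) × EuclideanSpace ℝ (Fin n))) :
    ∫⁻ γ, ENNReal.ofReal (pathKE zero_le_one γ) ∂(π.map (segmentPath _))
      = ∫⁻ p, ENNReal.ofReal ((1 / 2) * ‖p.1 - p.2‖ ^ 2) ∂π := by
  simp [measurableEmbedding_segmentPath.lintegral_map, pathKE_segmentPath, norm_sub_rev]

end Measures

theorem transport_cost_eq_inf_expected_kinetic_energy_general {n : ℕ}
    (μ ν : Measure (EuclideanSpace ℝ (Fin n))) :
    sInf {c : ℝ≥0∞ |
        ∃ π : Measure (EuclideanSpace ℝ (Fin n) × EuclideanSpace ℝ (Fin n)),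
          IsProbabilityMeasure π ∧ IsCoupling π μ ν ∧
          c = ∫⁻ p, ENNReal.ofReal ((1 / 2) * ‖p.1 - p.2‖ ^ 2) ∂π} =
    sInf {c : ℝ≥0∞ |
        ∃ P : Measure C(Set.Icc (0:ℝ) 1, EuclideanSpace ℝ (Fin n)),
          IsProbabilityMeasure P ∧
          P.map (fun γ => γ ⟨0, Set.left_mem_Icc.mpr zero_le_one⟩) = μ ∧
          P.map (fun γ => γ ⟨1, Set.right_mem_Icc.mpr zero_le_one⟩) = ν ∧
          (∀ᵐ γ ∂P, IsC1Path zero_le_one γ ∧ FiniteKE zero_le_one γ) ∧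
          c = ∫⁻ γ, ENNReal.ofReal (pathKE zero_le_one γ) ∂P} := by
  apply le_antisymm
  · refine le_sInf ?_
    rintro _ ⟨P, hP, hP₀, hP₁, hPC1, rfl⟩
    exact sInf_le_of_le ⟨P.map (pathEndpoints _),
      Measure.isProbabilityMeasure_map measurable_pathEndpoints.aemeasurable,
      isCoupling_map_pathEndpoints_iff.2 ⟨hP₀, hP₁⟩, rfl⟩
      (lintegral_cost_map_pathEndpoints_le (hPC1.mono fun _ h => h.1))
  · refine le_sInf ?_
    rintro _ ⟨π, hπ, hπμν, rfl⟩
    rw [← map_segmentPath_map_pathEndpoints π] at hπμν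
    obtain ⟨hP₀, hP₁⟩ := isCoupling_map_pathEndpoints_iff.1 hπμν
    exact sInf_le ⟨π.map (segmentPath _),
      Measure.isProbabilityMeasure_map measurableEmbedding_segmentPath.measurable.aemeasurable,
      hP₀, hP₁, ae_isC1Path_map_segmentPath π, (lintegral_pathKE_map_segmentPath π).symm⟩

/-- If the optimal quadratic transportation cost between `μ` and `ν` is
finite, then it equals the infimum, over Borel probability measures `P` on `C([0,1], ℝⁿ)`
with marginals `μ` at time `0` and `ν` at time `1` concentrating on continuously
differentiable paths of finite kinetic energy, of the expected kinetic energy. -/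
theorem transport_cost_eq_inf_expected_kinetic_energy {n : ℕ}
    (μ ν : Measure (EuclideanSpace ℝ (Fin n)))
    [IsProbabilityMeasure μ] [IsProbabilityMeasure ν]
    (hfin : sInf {c : ℝ≥0∞ |
        ∃ π : Measure (EuclideanSpace ℝ (Fin n) × EuclideanSpace ℝ (Fin n)),
          IsProbabilityMeasure π ∧ IsCoupling π μ ν ∧
          c = ∫⁻ p, ENNReal.ofReal ((1 / 2) * ‖p.1 - p.2‖ ^ 2) ∂π} ≠ ⊤) :
    sInf {c : ℝ≥0∞ |
        ∃ π : Measure (EuclideanSpace ℝ (Fin n) × EuclideanSpace ℝ (Fin n)),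
          IsProbabilityMeasure π ∧ IsCoupling π μ ν ∧
          c = ∫⁻ p, ENNReal.ofReal ((1 / 2) * ‖p.1 - p.2‖ ^ 2) ∂π} =
    sInf {c : ℝ≥0∞ |
        ∃ P : Measure C(Set.Icc (0:ℝ) 1, EuclideanSpace ℝ (Fin n)),
          IsProbabilityMeasure P ∧
          P.map (fun γ => γ ⟨0, Set.left_mem_Icc.mpr zero_le_one⟩) = μ ∧
          P.map (fun γ => γ ⟨1, Set.right_mem_Icc.mpr zero_le_one⟩) = ν ∧
          (∀ᵐ γ ∂P, IsC1Path zero_le_one γ ∧ FiniteKE zero_le_one γ) ∧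
          c = ∫⁻ γ, ENNReal.ofReal (pathKE zero_le_one γ) ∂P} :=
  transport_cost_eq_inf_expected_kinetic_energy_general μ ν
end

section
/- Let b : ℝⁿ × ℝ → ℝⁿ be continuously differentiable. Let φ : ℝⁿ × ℝ → ℝ be everywhere positive, twice continuously differentiable in x and continuously differentiable in t, and satisfy ∂φ/∂t + b·∇φ + (1/2)Δφ = 0 on ℝⁿ × (t₀,t₁). Let ρ̃ : ℝⁿ × ℝ → ℝ be twice continuously differentiable in x and continuously differentiable in t and satisfy the Fokker–Planck equation ∂ρ̃/∂t + ∇·((b + ∇ ln φ) ρ̃) − (1/2)Δρ̃ = 0 on ℝⁿ × (t₀,t₁). Then the function φ̂ := ρ̃/φ satisfies ∂φ̂/∂t + ∇·(b φ̂) − (1/2)Δφ̂ = 0 on ℝⁿ × (t₀,t₁). -/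
/-! Write `ρ̃ = φ̂ φ`. Since `ρ̃ (b + ∇ ln φ) = φ (φ̂ b) + φ̂ ∇φ`, the product rules for `∇·`, `Δ`
and `∂ₜ` split the equation for `ρ̃` into `φ` times the equation for `φ̂` plus `φ̂` times the backward
equation `∂ₜφ + b·∇φ + ½Δφ = 0` for `φ` (Doob's `h`-transform identity). The latter vanishes and
`φ > 0`. -/

open Set
open scoped RealInnerProductSpace

noncomputable def lap {n : ℕ} (f : EuclideanSpace ℝ (Fin n) → ℝ)
    (x : EuclideanSpace ℝ (Fin n)) : ℝ :=
  ∑ i : Fin n,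
    fderiv ℝ (fun y => fderiv ℝ f y (EuclideanSpace.single i 1)) x (EuclideanSpace.single i 1)

noncomputable def diver {n : ℕ} (w : EuclideanSpace ℝ (Fin n) → EuclideanSpace ℝ (Fin n))
    (x : EuclideanSpace ℝ (Fin n)) : ℝ :=
  ∑ i : Fin n, fderiv ℝ (fun y => w y i) x (EuclideanSpace.single i 1)

section
variable {F : Type*} [NormedAddCommGroup F] [InnerProductSpace ℝ F] [CompleteSpace F]

theorem gradient_mul {f g : F → ℝ} {x : F} (hf : DifferentiableAt ℝ f x)
    (hg : DifferentiableAt ℝ g x) :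
    gradient (fun y => f y * g y) x = f x • gradient g x + g x • gradient f x := by
  simp only [gradient, fderiv_fun_mul hf hg, map_add, map_smul]

theorem gradient_log {v : F → ℝ} {y : F} (hv : DifferentiableAt ℝ v y) (hv0 : v y ≠ 0) :
    gradient (fun z => Real.log (v z)) y = (v y)⁻¹ • gradient v y := by
  rw [gradient, gradient, (hv.hasFDerivAt.log hv0).fderiv, map_smul]

theorem ContDiff.differentiable_gradient {f : F → ℝ} (hf : ContDiff ℝ 2 f) :
    Differentiable ℝ (gradient f) :=
  (InnerProductSpace.toDual ℝ F).symm.differentiable.comp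
    ((hf.fderiv_right (by norm_num)).differentiable one_ne_zero)

end

theorem EuclideanSpace.gradient_apply {ι : Type*} [Fintype ι] [DecidableEq ι]
    (f : EuclideanSpace ℝ ι → ℝ) (x : EuclideanSpace ℝ ι) (i : ι) :
    gradient f x i = fderiv ℝ f x (EuclideanSpace.single i 1) := by
  rw [← inner_gradient_left, EuclideanSpace.inner_single_right]
  simp

section
variable {n : ℕ}
local notation "E" => EuclideanSpace ℝ (Fin n)

theorem diver_gradient (f : E → ℝ) : diver (gradient f) = lap f := by
  ext x
  refine Finset.sum_congr rfl fun i _ => ?_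
  simp only [EuclideanSpace.gradient_apply]

theorem diver_add {V W : E → E} {x : E} (hV : DifferentiableAt ℝ V x)
    (hW : DifferentiableAt ℝ W x) :
    diver (fun y => V y + W y) x = diver V x + diver W x := by
  rw [differentiableAt_piLp] at hV hW
  simp only [diver, PiLp.add_apply, ← Finset.sum_add_distrib]
  refine Finset.sum_congr rfl fun i _ => ?_
  rw [fderiv_fun_add (hV i) (hW i), add_apply]

theorem diver_smul {f : E → ℝ} {W : E → E} {x : E} (hf : DifferentiableAt ℝ f x)
    (hW : DifferentiableAt ℝ W x) :
    diver (fun y => f y • W y) x = f x * diver W x + ⟪W x, gradient f x⟫ := by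
  rw [differentiableAt_piLp] at hW
  simp only [diver, PiLp.smul_apply, smul_eq_mul, PiLp.inner_apply, Finset.mul_sum,
    ← Finset.sum_add_distrib, EuclideanSpace.gradient_apply]
  refine Finset.sum_congr rfl fun i _ => ?_
  rw [fderiv_fun_mul hf (hW i)]
  simp only [add_apply, smul_apply, smul_eq_mul, RCLike.inner_apply, conj_trivial]
  ring

theorem lap_mul {f g : E → ℝ} (hf : ContDiff ℝ 2 f) (hg : ContDiff ℝ 2 g) (x : E) :
    lap (fun y => f y * g y) x
      = f x * lap g x + 2 * ⟪gradient f x, gradient g x⟫ + g x * lap f x := by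
  have hf1 := hf.differentiable two_ne_zero
  have hg1 := hg.differentiable two_ne_zero
  have hgrad : gradient (fun y => f y * g y) = fun y => f y • gradient g y + g y • gradient f y :=
    funext fun y => gradient_mul (hf1 y) (hg1 y)
  rw [← diver_gradient, hgrad,
    diver_add (V := fun y => f y • gradient g y) (W := fun y => g y • gradient f y)
      ((hf1 x).smul (hg.differentiable_gradient x))
      ((hg1 x).smul (hf.differentiable_gradient x)),
    diver_smul (hf1 x) (hg.differentiable_gradient x),
    diver_smul (hg1 x) (hf.differentiable_gradient x), diver_gradient, diver_gradient,
    real_inner_comm (gradient f x)]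
  ring

noncomputable def fokkerPlanckOp (B : E → E) (u : E → ℝ) (x : E) : ℝ :=
  diver (fun y => u y • B y) x - 1 / 2 * lap u x

noncomputable def backwardKolmogorovOp (B : E → E) (v : E → ℝ) (x : E) : ℝ :=
  ⟪B x, gradient v x⟫ + 1 / 2 * lap v x

theorem fokkerPlanckOp_add_gradient_log_mul {B : E → E} {w v : E → ℝ} {x : E}
    (hB : DifferentiableAt ℝ B x) (hw : ContDiff ℝ 2 w) (hv : ContDiff ℝ 2 v)
    (hv0 : ∀ y, v y ≠ 0) :
    fokkerPlanckOp (fun y => B y + gradient (fun z => Real.log (v z)) y) (fun y => w y * v y) x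
      = v x * fokkerPlanckOp B w x + w x * backwardKolmogorovOp B v x := by
  have hw1 := hw.differentiable two_ne_zero
  have hv1 := hv.differentiable two_ne_zero
  have hflux : (fun y => (w y * v y) • (B y + gradient (fun z => Real.log (v z)) y))
      = fun y => v y • (w y • B y) + w y • gradient v y := by
    funext y
    rw [gradient_log (hv1 y) (hv0 y), smul_add, smul_smul, smul_smul,
      mul_inv_cancel_right₀ (hv0 y), mul_comm (w y)]
  have hwB : DifferentiableAt ℝ (fun y => w y • B y) x := (hw1 x).smul hB
  rw [fokkerPlanckOp, hflux,
    diver_add (V := fun y => v y • (w y • B y)) (W := fun y => w y • gradient v y)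
      ((hv1 x).smul hwB) ((hw1 x).smul (hv.differentiable_gradient x)),
    diver_smul (hv1 x) hwB, diver_smul (hw1 x) (hv.differentiable_gradient x),
    diver_gradient, lap_mul hw hv, fokkerPlanckOp, backwardKolmogorovOp, inner_smul_left,
    real_inner_comm (gradient w x)]
  simp only [conj_trivial]
  ring

theorem fokkerPlanckOp_add_gradient_log {B : E → E} {u v : E → ℝ} {x : E}
    (hB : DifferentiableAt ℝ B x) (hu : ContDiff ℝ 2 u) (hv : ContDiff ℝ 2 v)
    (hv0 : ∀ y, v y ≠ 0) :
    fokkerPlanckOp (fun y => B y + gradient (fun z => Real.log (v z)) y) u x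
      = v x * fokkerPlanckOp B (fun y => u y / v y) x
        + u x / v x * backwardKolmogorovOp B v x := by
  have hu_eq : u = fun y => u y / v y * v y := funext fun y => (div_mul_cancel₀ _ (hv0 y)).symm
  conv_lhs => rw [hu_eq]
  exact fokkerPlanckOp_add_gradient_log_mul hB (hu.div hv hv0) hv hv0

end

theorem deriv_eq_mul_deriv_div_add {c d : ℝ → ℝ} {t : ℝ} (hc : DifferentiableAt ℝ c t)
    (hd : DifferentiableAt ℝ d t) (hd0 : d t ≠ 0) :
    deriv c t = d t * deriv (fun s => c s / d s) t + c t / d t * deriv d t := by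
  rw [deriv_fun_div hc hd hd0]
  field_simp
  ring

/-- If `φ > 0` is space-time harmonic for the drift `b` and `ρ̃` solves the
Fokker–Planck equation with drift `b + ∇ ln φ`, then `φ̂ := ρ̃/φ` solves the Fokker–Planck
equation with drift `b`, i.e. `∂φ̂/∂t + ∇·(b φ̂) − (1/2)Δφ̂ = 0` on `ℝⁿ × (t₀,t₁)`. -/
theorem ratio_solves_fokker_planck {n : ℕ} (t₀ t₁ : ℝ)
    (b : EuclideanSpace ℝ (Fin n) → ℝ → EuclideanSpace ℝ (Fin n))
    (φ ρt : EuclideanSpace ℝ (Fin n) → ℝ → ℝ)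
    (hb : ContDiff ℝ 1 fun p : EuclideanSpace ℝ (Fin n) × ℝ => b p.1 p.2)
    (hφpos : ∀ x t, 0 < φ x t)
    (hφx : ∀ t : ℝ, ContDiff ℝ 2 fun x => φ x t)
    (hφt : ∀ x, ContDiff ℝ 1 fun t => φ x t)
    (hφpde : ∀ x, ∀ t ∈ Set.Ioo t₀ t₁,
      deriv (fun s => φ x s) t + ⟪b x t, gradient (fun y => φ y t) x⟫
        + (1 / 2) * lap (fun y => φ y t) x = 0)
    (hρx : ∀ t : ℝ, ContDiff ℝ 2 fun x => ρt x t)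
    (hρt : ∀ x, ContDiff ℝ 1 fun t => ρt x t)
    (hρpde : ∀ x, ∀ t ∈ Set.Ioo t₀ t₁,
      deriv (fun s => ρt x s) t
        + diver (fun y => ρt y t • (b y t + gradient (fun z => Real.log (φ z t)) y)) x
        - (1 / 2) * lap (fun y => ρt y t) x = 0) :
    ∀ x, ∀ t ∈ Set.Ioo t₀ t₁,
      deriv (fun s => ρt x s / φ x s) t
        + diver (fun y => (ρt y t / φ y t) • b y t) x
        - (1 / 2) * lap (fun y => ρt y t / φ y t) x = 0 := by
  intro x t ht
  have hφ0 : ∀ y s, φ y s ≠ 0 := fun y s => (hφpos y s).ne'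
  have hbt : DifferentiableAt ℝ (fun y => b y t) x :=
    (hb.comp (contDiff_id.prodMk contDiff_const)).differentiable one_ne_zero x
  have htime := deriv_eq_mul_deriv_div_add ((hρt x).differentiable one_ne_zero t)
    ((hφt x).differentiable one_ne_zero t) (hφ0 x t)
  have hspace := fokkerPlanckOp_add_gradient_log hbt (hρx t) (hφx t) (hφ0 · t)
  simp only [fokkerPlanckOp, backwardKolmogorovOp] at hspace
  refine mul_left_cancel₀ (hφ0 x t) ?_
  linear_combination hρpde x t ht - htime - hspace - (ρt x t / φ x t) * hφpde x t ht
end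

section
/- Let Σ₀ be a symmetric positive definite real n×n matrix with positive semidefinite square root Σ₀^{1/2} and let Σ₁ be symmetric positive semidefinite; let Φ be an invertible real n×n matrix and M a symmetric positive definite real n×n matrix. Set S := Σ₀^{1/2} Φᵀ M⁻¹ Φ Σ₀^{1/2} and R := Σ₀^{1/2} Φᵀ M⁻¹ Σ₁ M⁻¹ Φ Σ₀^{1/2} (so R is positive semidefinite). Then, as ε tends to 0 from the right, the matrix Π_ε := Σ₀^{−1/2} [ (ε/2)I + S − ((ε²/4)I + R)^{1/2} ] Σ₀^{−1/2} converges to Π₀ := Σ₀^{−1/2} [ S − R^{1/2} ] Σ₀^{−1/2}, where X^{1/2} denotes the positive semidefinite square root of a positive semidefinite matrix X and Σ₀^{−1/2} the inverse of Σ₀^{1/2}. -/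
/-!
The matrix square root is continuous on the positive semidefinite cone: for the L² operator norm
it is given by an isometric continuous functional calculus. Since `R` is a congruence of `Σ₁`, it
is positive semidefinite, so `((ε²/4)I + R)^{1/2} → R^{1/2}`; the rest of `Π_ε` is affine in `ε`.
-/

open Matrix Filter
open scoped Classical

/-- The positive semidefinite square root of a positive semidefinite real matrix
(junk value `0` on matrices that are not positive semidefinite). -/
noncomputable def psdSqrt {n : ℕ} (X : Matrix (Fin n) (Fin n) ℝ) : Matrix (Fin n) (Fin n) ℝ :=
  if h : X.PosSemidef then
    (h.1.eigenvectorUnitary : Matrix (Fin n) (Fin n) ℝ) *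
      diagonal ((↑) ∘ (√·) ∘ h.1.eigenvalues) *
      (star h.1.eigenvectorUnitary : Matrix (Fin n) (Fin n) ℝ)
  else 0

open scoped MatrixOrder Topology

namespace Matrix

variable {n : ℕ}

lemma psdSqrt_eq_cfcSqrt {X : Matrix (Fin n) (Fin n) ℝ} (hX : X.PosSemidef) :
    psdSqrt X = CFC.sqrt X := by
  rw [psdSqrt, dif_pos hX, CFC.sqrt_eq_real_sqrt X hX.nonneg, cfcₙ_eq_cfc, hX.1.cfc_eq]
  simp [IsHermitian.cfc, Function.comp_def]

lemma posSemidef_psdSqrt (X : Matrix (Fin n) (Fin n) ℝ) : (psdSqrt X).PosSemidef := by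
  by_cases hX : X.PosSemidef
  · rw [psdSqrt_eq_cfcSqrt hX]
    exact (CFC.sqrt_nonneg X).posSemidef
  · rw [psdSqrt, dif_neg hX]
    exact PosSemidef.zero

open scoped Matrix.Norms.L2Operator in
lemma continuousOn_psdSqrt :
    ContinuousOn (psdSqrt : Matrix (Fin n) (Fin n) ℝ → _) {X | X.PosSemidef} := by
  have hset : {X : Matrix (Fin n) (Fin n) ℝ | X.PosSemidef} = {X | 0 ≤ X} :=
    Set.ext fun _ => nonneg_iff_posSemidef.symm
  rw [hset]
  exact CFC.continuousOn_sqrt.congr fun X hX => psdSqrt_eq_cfcSqrt (nonneg_iff_posSemidef.mp hX)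

lemma _root_.Filter.Tendsto.psdSqrt {α : Type*} {l : Filter α} {f : α → Matrix (Fin n) (Fin n) ℝ}
    {X : Matrix (Fin n) (Fin n) ℝ} (hf : Tendsto f l (𝓝 X)) (hfX : ∀ᶠ a in l, (f a).PosSemidef)
    (hX : X.PosSemidef) : Tendsto (fun a => psdSqrt (f a)) l (𝓝 (psdSqrt X)) :=
  (continuousOn_psdSqrt X hX).tendsto.comp (tendsto_nhdsWithin_iff.mpr ⟨hf, hfX⟩)

lemma PosSemidef.mul_transpose_mul_inv_mul_mul_inv_mul_mul {A B M S : Matrix (Fin n) (Fin n) ℝ}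
    (hS : S.PosSemidef) (hA : A.IsHermitian) (hM : M.IsHermitian) :
    (A * Bᵀ * M⁻¹ * S * M⁻¹ * B * A).PosSemidef := by
  have hMinv : M⁻¹ᵀ = M⁻¹ := by
    rw [transpose_nonsing_inv, ← conjTranspose_eq_transpose_of_trivial, hM.eq]
  have hAt : Aᵀ = A := by rw [← conjTranspose_eq_transpose_of_trivial, hA.eq]
  have hcongr := hS.conjTranspose_mul_mul_same (M⁻¹ * B * A)
  simpa only [conjTranspose_eq_transpose_of_trivial, transpose_mul, hAt, hMinv, Matrix.mul_assoc]
    using hcongr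

end Matrix

theorem schrodinger_bridge_gain_zero_noise_limit_general {n : ℕ}
    (S0 S1 M Φ : Matrix (Fin n) (Fin n) ℝ)
    (hS1 : S1.PosSemidef)
    (hM : M.PosDef) :
    Tendsto
      (fun ε : ℝ => (psdSqrt S0)⁻¹ *
        ((ε / 2) • (1 : Matrix (Fin n) (Fin n) ℝ)
          + psdSqrt S0 * Φᵀ * M⁻¹ * Φ * psdSqrt S0
          - psdSqrt ((ε ^ 2 / 4) • (1 : Matrix (Fin n) (Fin n) ℝ)
              + psdSqrt S0 * Φᵀ * M⁻¹ * S1 * M⁻¹ * Φ * psdSqrt S0)) *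
        (psdSqrt S0)⁻¹)
      (nhdsWithin 0 (Set.Ioi 0))
      (nhds ((psdSqrt S0)⁻¹ *
        (psdSqrt S0 * Φᵀ * M⁻¹ * Φ * psdSqrt S0
          - psdSqrt (psdSqrt S0 * Φᵀ * M⁻¹ * S1 * M⁻¹ * Φ * psdSqrt S0)) *
        (psdSqrt S0)⁻¹)) := by
  set R := psdSqrt S0 * Φᵀ * M⁻¹ * S1 * M⁻¹ * Φ * psdSqrt S0
  have hR : R.PosSemidef :=
    hS1.mul_transpose_mul_inv_mul_mul_inv_mul_mul (posSemidef_psdSqrt S0).1 hM.1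
  have hshift : ∀ ε : ℝ, ((ε ^ 2 / 4) • (1 : Matrix (Fin n) (Fin n) ℝ) + R).PosSemidef :=
    fun ε => (PosSemidef.one.smul (by positivity)).add hR
  have hroot : Tendsto (fun ε : ℝ => psdSqrt ((ε ^ 2 / 4) • (1 : Matrix (Fin n) (Fin n) ℝ) + R))
      (𝓝 0) (𝓝 (psdSqrt R)) := by
    refine Tendsto.psdSqrt ?_ (Eventually.of_forall hshift) hR
    exact Continuous.tendsto' (by fun_prop) _ _ (by simp)
  have hlin : Tendsto (fun ε : ℝ => (ε / 2) • (1 : Matrix (Fin n) (Fin n) ℝ)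
      + psdSqrt S0 * Φᵀ * M⁻¹ * Φ * psdSqrt S0) (𝓝 0)
      (𝓝 (psdSqrt S0 * Φᵀ * M⁻¹ * Φ * psdSqrt S0)) := by
    exact Continuous.tendsto' (by fun_prop) _ _ (by simp)
  exact (((hlin.sub hroot).const_mul _).mul_const _).mono_left nhdsWithin_le_nhds

/-- With `S := Σ₀^{1/2} Φᵀ M⁻¹ Φ Σ₀^{1/2}` and
`R := Σ₀^{1/2} Φᵀ M⁻¹ Σ₁ M⁻¹ Φ Σ₀^{1/2}`, the Schrödinger-bridge feedback gain
`Π_ε = Σ₀^{−1/2}[(ε/2)I + S − ((ε²/4)I + R)^{1/2}]Σ₀^{−1/2}` converges, as `ε → 0⁺`,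
to `Π₀ = Σ₀^{−1/2}[S − R^{1/2}]Σ₀^{−1/2}`. -/
theorem schrodinger_bridge_gain_zero_noise_limit {n : ℕ}
    (S0 S1 M Φ : Matrix (Fin n) (Fin n) ℝ)
    (hS0 : S0.PosDef) (hS1 : S1.PosSemidef)
    (hΦ : IsUnit Φ.det) (hM : M.PosDef) :
    Tendsto
      (fun ε : ℝ => (psdSqrt S0)⁻¹ *
        ((ε / 2) • (1 : Matrix (Fin n) (Fin n) ℝ)
          + psdSqrt S0 * Φᵀ * M⁻¹ * Φ * psdSqrt S0
          - psdSqrt ((ε ^ 2 / 4) • (1 : Matrix (Fin n) (Fin n) ℝ)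
              + psdSqrt S0 * Φᵀ * M⁻¹ * S1 * M⁻¹ * Φ * psdSqrt S0)) *
        (psdSqrt S0)⁻¹)
      (nhdsWithin 0 (Set.Ioi 0))
      (nhds ((psdSqrt S0)⁻¹ *
        (psdSqrt S0 * Φᵀ * M⁻¹ * Φ * psdSqrt S0
          - psdSqrt (psdSqrt S0 * Φᵀ * M⁻¹ * S1 * M⁻¹ * Φ * psdSqrt S0)) *
        (psdSqrt S0)⁻¹)) :=
  schrodinger_bridge_gain_zero_noise_limit_general S0 S1 M Φ hS1 hM
end
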